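/- arXiv:2306.10132 — 4 statements merged into one kernel-verified Lean document; each statement's English description precedes it below -/
import Mathlib

section
/- If the cycle C_3 has exactly one negative edge and C_n (n ≥ 3) has exactly one negative edge, then the balancing dimension of the Cartesian product C_3⁻ □ C_n⁻ equals 3. -/
open Finset
open scoped Classical

/-- A signed graph: a simple graph together with a ±1 sign on each edge. -/
structure SGraph (V : Type*) where
  G : SimpleGraph V
  sign : V → V → ℤ
  sign_symm : ∀ u v, sign u v = sign v u
  sign_mem : ∀ u v, G.Adj u v → sign u v = 1 ∨ sign u v = -1

variable {V V1 V2 W : Type*}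

/-- `ζ` is a positive k-switching function for the signed graph `S`. -/
def IsPosSwitching [Fintype V] (S : SGraph V) (k : ℕ) (ζ : V → Fin k → ℤ) : Prop :=
  (∀ v i, ζ v i = -1 ∨ ζ v i = 0 ∨ ζ v i = 1) ∧
  (∀ u v, S.G.Adj u v → (∑ i, ζ u i * ζ v i) ≠ 0) ∧
  (∀ u v, S.G.Adj u v → S.sign u v * Int.sign (∑ i, ζ u i * ζ v i) = 1)

def HasPosSwitching [Fintype V] (S : SGraph V) (k : ℕ) : Prop :=
  ∃ ζ : V → Fin k → ℤ, IsPosSwitching S k ζ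

/-- The balancing dimension: least `k ≥ 1` admitting a positive k-switching function. -/
noncomputable def bdim [Fintype V] (S : SGraph V) : ℕ :=
  sInf {k | 1 ≤ k ∧ HasPosSwitching S k}

/-- A signed graph is balanced iff it can be switched to all-positive by a 1-switching. -/
def SGraph.Balanced [Fintype V] (S : SGraph V) : Prop := HasPosSwitching S 1

/-- The negation of a signed graph. -/
def SGraph.neg (S : SGraph V) : SGraph V where
  G := S.G
  sign := fun u v => - S.sign u v
  sign_symm := fun u v => by (try dsimp only); rw [S.sign_symm]
  sign_mem := fun u v h => by rcases S.sign_mem u v h with h1 | h1 <;> simp [h1]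

def SGraph.Antibalanced [Fintype V] (S : SGraph V) : Prop := S.neg.Balanced

/-- Switching equivalence of signed graphs. -/
def SwitchEquiv (S1 S2 : SGraph V) : Prop :=
  S1.G = S2.G ∧ ∃ η : V → ℤ, (∀ v, η v = 1 ∨ η v = -1) ∧
    ∀ u v, S1.G.Adj u v → S2.sign u v = η u * S1.sign u v * η v

/-- The Cartesian product of signed graphs. -/
noncomputable def cartProd (S1 : SGraph V1) (S2 : SGraph V2) : SGraph (V1 × V2) where
  G := S1.G □ S2.G
  sign := fun p q => if p.2 = q.2 then S1.sign p.1 q.1 else S2.sign p.2 q.2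
  sign_symm := by
    intro u v
    (try dsimp only)
    rcases eq_or_ne u.2 v.2 with h | h
    · rw [if_pos h, if_pos h.symm, S1.sign_symm]
    · rw [if_neg h, if_neg (Ne.symm h), S2.sign_symm]
  sign_mem := by
    intro u v h
    (try dsimp only)
    rcases (SimpleGraph.boxProd_adj.mp h) with ⟨h1, h2⟩ | ⟨h1, h2⟩
    · rw [if_pos h2]; exact S1.sign_mem _ _ h1
    · rw [if_neg h1.ne]; exact S2.sign_mem _ _ h1
/-- The HG-lexicographic product of signed graphs. -/
noncomputable def lexHG (S1 : SGraph V1) (S2 : SGraph V2) : SGraph (V1 × V2) where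
  G := { Adj := fun p q => S1.G.Adj p.1 q.1 ∨ (p.1 = q.1 ∧ S2.G.Adj p.2 q.2)
         symm := by
           constructor
           rintro p q (h | ⟨h1, h2⟩)
           · exact Or.inl h.symm
           · exact Or.inr ⟨h1.symm, h2.symm⟩
         loopless := by
           constructor
           rintro p (h | ⟨_, h⟩)
           · exact S1.G.irrefl h
           · exact S2.G.irrefl h }
  sign := fun p q => if p.1 = q.1 then S2.sign p.2 q.2 else S1.sign p.1 q.1
  sign_symm := by
    intro u v
    (try dsimp only)
    rcases eq_or_ne u.1 v.1 with h | h
    · rw [if_pos h, if_pos h.symm, S2.sign_symm]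
    · rw [if_neg h, if_neg (Ne.symm h), S1.sign_symm]
  sign_mem := by
    rintro p q (h | ⟨h1, h2⟩)
    · (try dsimp only); rw [if_neg h.ne]; exact S1.sign_mem _ _ h
    · (try dsimp only); rw [if_pos h1]; exact S2.sign_mem _ _ h2

/-- The BCD-lexicographic product of signed graphs. -/
noncomputable def lexBCD (S1 : SGraph V1) (S2 : SGraph V2) : SGraph (V1 × V2) where
  G := { Adj := fun p q => S1.G.Adj p.1 q.1 ∨ (p.1 = q.1 ∧ S2.G.Adj p.2 q.2)
         symm := by
           constructor
           rintro p q (h | ⟨h1, h2⟩)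
           · exact Or.inl h.symm
           · exact Or.inr ⟨h1.symm, h2.symm⟩
         loopless := by
           constructor
           rintro p (h | ⟨_, h⟩)
           · exact S1.G.irrefl h
           · exact S2.G.irrefl h }
  sign := fun p q =>
    if S2.G.Adj p.2 q.2 then
      (if S1.G.Adj p.1 q.1 then S1.sign p.1 q.1 * S2.sign p.2 q.2 else S2.sign p.2 q.2)
    else S1.sign p.1 q.1
  sign_symm := by
    intro u v
    (try dsimp only)
    rw [S1.G.adj_comm v.1 u.1, S2.G.adj_comm v.2 u.2, S1.sign_symm v.1 u.1,
      S2.sign_symm v.2 u.2]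
  sign_mem := by
    rintro p q (h | ⟨h1, h2⟩) <;> (try dsimp only)
    · by_cases h2 : S2.G.Adj p.2 q.2
      · rw [if_pos h2, if_pos h]
        rcases S1.sign_mem _ _ h with e1 | e1 <;> rcases S2.sign_mem _ _ h2 with e2 | e2 <;>
          simp [e1, e2]
      · rw [if_neg h2]; exact S1.sign_mem _ _ h
    · rw [if_pos h2, if_neg (h1 ▸ S1.G.irrefl)]
      exact S2.sign_mem _ _ h2

/-- The tensor product of signed graphs. -/
def tensorProd (S1 : SGraph V1) (S2 : SGraph V2) : SGraph (V1 × V2) where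
  G := { Adj := fun p q => S1.G.Adj p.1 q.1 ∧ S2.G.Adj p.2 q.2
         symm := ⟨fun p q ⟨h1, h2⟩ => ⟨h1.symm, h2.symm⟩⟩
         loopless := ⟨fun p ⟨h1, _⟩ => S1.G.irrefl h1⟩ }
  sign := fun p q => S1.sign p.1 q.1 * S2.sign p.2 q.2
  sign_symm := by
    intro u v
    (try dsimp only)
    rw [S1.sign_symm, S2.sign_symm]
  sign_mem := by
    rintro p q ⟨h1, h2⟩
    (try dsimp only)
    rcases S1.sign_mem _ _ h1 with e1 | e1 <;> rcases S2.sign_mem _ _ h2 with e2 | e2 <;>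
      simp [e1, e2]

/-- The strong product of signed graphs. -/
noncomputable def strongProd (S1 : SGraph V1) (S2 : SGraph V2) : SGraph (V1 × V2) where
  G := { Adj := fun p q => (S1.G.Adj p.1 q.1 ∧ p.2 = q.2) ∨ (p.1 = q.1 ∧ S2.G.Adj p.2 q.2) ∨
           (S1.G.Adj p.1 q.1 ∧ S2.G.Adj p.2 q.2)
         symm := by
           constructor
           rintro p q (⟨h1, h2⟩ | ⟨h1, h2⟩ | ⟨h1, h2⟩)
           · exact Or.inl ⟨h1.symm, h2.symm⟩
           · exact Or.inr (Or.inl ⟨h1.symm, h2.symm⟩)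
           · exact Or.inr (Or.inr ⟨h1.symm, h2.symm⟩)
         loopless := by
           constructor
           rintro p (⟨h1, _⟩ | ⟨_, h2⟩ | ⟨h1, _⟩)
           · exact S1.G.irrefl h1
           · exact S2.G.irrefl h2
           · exact S1.G.irrefl h1 }
  sign := fun p q =>
    if p.1 = q.1 then S2.sign p.2 q.2
    else if p.2 = q.2 then S1.sign p.1 q.1
    else S1.sign p.1 q.1 * S2.sign p.2 q.2
  sign_symm := by
    intro u v
    (try dsimp only)
    rcases eq_or_ne u.1 v.1 with h | h
    · rw [if_pos h, if_pos h.symm, S2.sign_symm]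
    · rw [if_neg h, if_neg (Ne.symm h)]
      rcases eq_or_ne u.2 v.2 with h' | h'
      · rw [if_pos h', if_pos h'.symm, S1.sign_symm]
      · rw [if_neg h', if_neg (Ne.symm h'), S1.sign_symm, S2.sign_symm]
  sign_mem := by
    rintro p q (⟨h1, h2⟩ | ⟨h1, h2⟩ | ⟨h1, h2⟩) <;> (try dsimp only)
    · rw [if_neg h1.ne, if_pos h2]; exact S1.sign_mem _ _ h1
    · rw [if_pos h1]; exact S2.sign_mem _ _ h2
    · rw [if_neg h1.ne, if_neg h2.ne]
      rcases S1.sign_mem _ _ h1 with e1 | e1 <;> rcases S2.sign_mem _ _ h2 with e2 | e2 <;>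
        simp [e1, e2]
/-- The cycle on `ZMod n` (vertices `0,1,…,n-1`) with the single negative edge `{0,1}`. -/
noncomputable def Cneg (n : ℕ) : SGraph (ZMod n) where
  G := { Adj := fun i j => i ≠ j ∧ (i - j = 1 ∨ j - i = 1)
         symm := ⟨fun i j ⟨h1, h2⟩ => ⟨h1.symm, h2.symm⟩⟩
         loopless := ⟨fun i ⟨h1, _⟩ => h1 rfl⟩ }
  sign := fun i j => if (i = 0 ∧ j = 1) ∨ (i = 1 ∧ j = 0) then -1 else 1
  sign_symm := by
    intro u v
    (try dsimp only)
    exact if_congr (by tauto) rfl rfl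
  sign_mem := by
    intro u v _
    (try dsimp only)
    by_cases h : (u = 0 ∧ v = 1) ∨ (u = 1 ∧ v = 0)
    · rw [if_pos h]; exact Or.inr rfl
    · rw [if_neg h]; exact Or.inl rfl

/-- The all-negative complete signed graph on `n` vertices. -/
def Kneg (n : ℕ) : SGraph (Fin n) where
  G := ⊤
  sign := fun _ _ => -1
  sign_symm := fun _ _ => rfl
  sign_mem := fun _ _ _ => Or.inr rfl

/-- The edgeless signed graph on `k` vertices. -/
def Nk (k : ℕ) : SGraph (Fin k) where
  G := ⊥
  sign := fun _ _ => 1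
  sign_symm := fun _ _ => rfl
  sign_mem := fun _ _ h => (h.elim)

/-- The lexicographic product of simple graphs. -/
def lexProdGraph (G : SimpleGraph V1) (H : SimpleGraph V2) : SimpleGraph (V1 × V2) where
  Adj p q := G.Adj p.1 q.1 ∨ (p.1 = q.1 ∧ H.Adj p.2 q.2)
  symm := by
    constructor
    rintro p q (h | ⟨h1, h2⟩)
    · exact Or.inl h.symm
    · exact Or.inr ⟨h1.symm, h2.symm⟩
  loopless := by
    constructor
    rintro p (h | ⟨_, h⟩)
    · exact G.irrefl h
    · exact H.irrefl h

/-!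
Lower bound: the copy of `C₃⁻` in the layer `y = 0` is a negative triangle, and for `k ≤ 2` no
three vectors of `{-1,0,1}ᵏ` have pairwise inner products whose signs multiply to `-1` (in
dimension 2 the nonzero ternary vectors lie on four lines forming two orthogonal pairs, so three
pairwise non-orthogonal ones contain two parallel ones).

Upper bound: if `ζ₁, ζ₂` are positive `k`-switchings of `Σ₁, Σ₂` with all entries `±1`, then the
coordinatewise product `(u, v) ↦ ζ₁ u * ζ₂ v` is a positive `k`-switching of `Σ₁ □ Σ₂`, since
multiplying coordinatewise by a `±1` vector preserves inner products. Every `C_n⁻` has such a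
3-switching: `(1,1,1)` at `0`, `(1,-1,-1)` at `1` and `(1,1,-1)` elsewhere.
-/

lemma coe_sign_eq_self_of_ternary {x : ℤ} (hx : x = -1 ∨ x = 0 ∨ x = 1) :
    ((SignType.sign x : SignType) : ℤ) = x := by
  rcases hx with rfl | rfl | rfl <;> rfl

lemma ternary_of_isUnit {x : ℤ} (hx : IsUnit x) : x = -1 ∨ x = 0 ∨ x = 1 := by
  rcases Int.isUnit_iff.mp hx with h | h <;> simp [h]

lemma sum_mul_mul_of_isUnit {ι : Type*} (s : Finset ι) (a b c : ι → ℤ)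
    (hc : ∀ i, IsUnit (c i)) : ∑ i ∈ s, a i * c i * (b i * c i) = ∑ i ∈ s, a i * b i :=
  Finset.sum_congr rfl fun i _ => by rw [mul_mul_mul_comm, Int.isUnit_mul_self (hc i), mul_one]

lemma isPosSwitching_iff_sign_eq [Fintype V] {S : SGraph V} {k : ℕ} {ζ : V → Fin k → ℤ} :
    IsPosSwitching S k ζ ↔ (∀ v i, ζ v i = -1 ∨ ζ v i = 0 ∨ ζ v i = 1) ∧
      ∀ u v, S.G.Adj u v → Int.sign (∑ i, ζ u i * ζ v i) = S.sign u v := by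
  refine and_congr_right fun _ => ⟨fun ⟨_, hsign⟩ u v huv => ?_, fun h => ⟨fun u v huv => ?_,
    fun u v huv => ?_⟩⟩
  · have := hsign u v huv
    rcases S.sign_mem u v huv with hs | hs <;> rw [hs] at this ⊢ <;> omega
  · intro h0
    have := h u v huv
    rw [h0, Int.sign_zero] at this
    rcases S.sign_mem u v huv with hs | hs <;> omega
  · rw [h u v huv]
    rcases S.sign_mem u v huv with hs | hs <;> simp [hs]

theorem IsPosSwitching.cartProd [Fintype V1] [Fintype V2] {S1 : SGraph V1} {S2 : SGraph V2}
    {k : ℕ} {ζ1 : V1 → Fin k → ℤ} {ζ2 : V2 → Fin k → ℤ} (h1 : IsPosSwitching S1 k ζ1)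
    (h2 : IsPosSwitching S2 k ζ2) (hu1 : ∀ u i, IsUnit (ζ1 u i)) (hu2 : ∀ v i, IsUnit (ζ2 v i)) :
    IsPosSwitching (cartProd S1 S2) k (fun p i => ζ1 p.1 i * ζ2 p.2 i) := by
  rw [isPosSwitching_iff_sign_eq] at h1 h2 ⊢
  refine ⟨fun p i => ternary_of_isUnit ((hu1 p.1 i).mul (hu2 p.2 i)), ?_⟩
  rintro ⟨u, y⟩ ⟨v, z⟩ huv
  rcases SimpleGraph.boxProd_adj.mp huv with ⟨huv, rfl : y = z⟩ | ⟨hyz, rfl : u = v⟩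
  · rw [sum_mul_mul_of_isUnit _ _ _ _ (hu2 y), h1.2 u v huv]
    exact (if_pos rfl).symm
  · simp_rw [mul_comm (ζ1 u _)]
    rw [sum_mul_mul_of_isUnit _ _ _ _ (hu1 u), h2.2 y z hyz]
    exact (if_neg hyz.ne).symm

def SGraph.IsNegTriangle (S : SGraph V) (u v w : V) : Prop :=
  S.G.Adj u v ∧ S.G.Adj v w ∧ S.G.Adj w u ∧ S.sign u v * S.sign v w * S.sign w u = -1

lemma SGraph.IsNegTriangle.cartProd {S1 : SGraph V1} {u v w : V1} (h : S1.IsNegTriangle u v w)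
    (S2 : SGraph V2) (y : V2) : (cartProd S1 S2).IsNegTriangle (u, y) (v, y) (w, y) := by
  obtain ⟨huv, hvw, hwu, hsign⟩ := h
  exact ⟨SimpleGraph.boxProd_adj_left.mpr huv, SimpleGraph.boxProd_adj_left.mpr hvw,
    SimpleGraph.boxProd_adj_left.mpr hwu, by simpa [_root_.cartProd] using hsign⟩

lemma sign_sum_mul_ne_neg_one_of_le_two {k : ℕ} (hk : k ≤ 2) (a b c : Fin k → SignType) :
    Int.sign (∑ i, (a i : ℤ) * b i) * Int.sign (∑ i, (b i : ℤ) * c i) *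
      Int.sign (∑ i, (c i : ℤ) * a i) ≠ -1 := by
  revert a b c
  interval_cases k <;> decide

theorem IsPosSwitching.three_le_of_isNegTriangle [Fintype V] {S : SGraph V} {k : ℕ}
    {ζ : V → Fin k → ℤ} (hζ : IsPosSwitching S k ζ) {u v w : V} (ht : S.IsNegTriangle u v w) :
    3 ≤ k := by
  obtain ⟨hζ, hsign⟩ := isPosSwitching_iff_sign_eq.mp hζ
  obtain ⟨huv, hvw, hwu, hneg⟩ := ht
  by_contra! hk
  apply sign_sum_mul_ne_neg_one_of_le_two (by omega) (fun i => SignType.sign (ζ u i))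
    (fun i => SignType.sign (ζ v i)) (fun i => SignType.sign (ζ w i))
  simp only [coe_sign_eq_self_of_ternary (hζ _ _)]
  rwa [hsign u v huv, hsign v w hvw, hsign w u hwu]

lemma isNegTriangle_Cneg_three : (Cneg 3).IsNegTriangle 0 1 2 :=
  ⟨⟨by decide, by decide⟩, ⟨by decide, by decide⟩, ⟨by decide, by decide⟩, by decide⟩

def cnegSwitching (n : ℕ) (j : ZMod n) : Fin 3 → ℤ :=
  if j = 0 then ![1, 1, 1] else if j = 1 then ![1, -1, -1] else ![1, 1, -1]

lemma isUnit_cnegSwitching (n : ℕ) (j : ZMod n) (i : Fin 3) : IsUnit (cnegSwitching n j i) := by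
  unfold cnegSwitching
  split_ifs <;> fin_cases i <;> decide

lemma isPosSwitching_cnegSwitching (n : ℕ) [NeZero n] :
    IsPosSwitching (Cneg n) 3 (cnegSwitching n) := by
  refine isPosSwitching_iff_sign_eq.mpr
    ⟨fun j i => ternary_of_isUnit (isUnit_cnegSwitching n j i), fun u v huv => ?_⟩
  have hne : u ≠ v := huv.1
  simp only [cnegSwitching, Cneg]
  split_ifs <;> simp_all [Fin.sum_univ_three]

theorem stmt4_general (n : ℕ) [NeZero n] :
    bdim (cartProd (Cneg 3) (Cneg n)) = 3 := by
  have h3 : HasPosSwitching (cartProd (Cneg 3) (Cneg n)) 3 :=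
    ⟨_, (isPosSwitching_cnegSwitching 3).cartProd (isPosSwitching_cnegSwitching n)
      (isUnit_cnegSwitching 3) (isUnit_cnegSwitching n)⟩
  refine IsLeast.csInf_eq ⟨⟨by norm_num, h3⟩, fun k ⟨_, _, hζ⟩ => ?_⟩
  exact hζ.three_le_of_isNegTriangle (isNegTriangle_Cneg_three.cartProd (Cneg n) 0)

theorem stmt4 (n : ℕ) [NeZero n] (hn : 3 ≤ n) :
    bdim (cartProd (Cneg 3) (Cneg n)) = 3 :=
  stmt4_general n
end

section
/- For any signed graph Σ and the edgeless graph N_k on k vertices, bdim(N_k[Σ]) = bdim(Σ) and bdim(Σ[N_k]) = bdim(Σ), where [·] denotes the HG-lexicographic product. -/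
open Finset
open scoped Classical

variable {V V1 V2 W : Type*}

/-! A positive switching function pulls back along any map of signed graphs that sends edges to
edges of the same sign. The projection `N_k[Σ] → Σ` (resp. `Σ[N_k] → Σ`) and the inclusion of
one fibre (resp. one layer) `Σ → N_k[Σ]` (resp. `Σ → Σ[N_k]`) are such maps, so `Σ` and either
product admit positive `n`-switchings for exactly the same `n`. -/

def IsSignedHom (T : SGraph W) (S : SGraph V) (f : W → V) : Prop :=
  ∀ u v, T.G.Adj u v → S.G.Adj (f u) (f v) ∧ T.sign u v = S.sign (f u) (f v)

section Pullback

variable [Fintype V] [Fintype W] {T : SGraph W} {S : SGraph V} {f : W → V}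

theorem IsPosSwitching.comp {n : ℕ} {ζ : V → Fin n → ℤ} (hζ : IsPosSwitching S n ζ)
    (hf : IsSignedHom T S f) : IsPosSwitching T n (ζ ∘ f) := by
  obtain ⟨hval, hne, hsign⟩ := hζ
  refine ⟨fun v => hval (f v), fun u v huv => hne _ _ (hf u v huv).1, fun u v huv => ?_⟩
  rw [(hf u v huv).2]
  exact hsign _ _ (hf u v huv).1

theorem HasPosSwitching.of_isSignedHom {n : ℕ} (h : HasPosSwitching S n)
    (hf : IsSignedHom T S f) : HasPosSwitching T n :=
  let ⟨ζ, hζ⟩ := h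
  ⟨ζ ∘ f, hζ.comp hf⟩

theorem bdim_eq_of_isSignedHom {g : V → W} (hf : IsSignedHom T S f) (hg : IsSignedHom S T g) :
    bdim T = bdim S :=
  congrArg sInf <| Set.ext fun _ =>
    and_congr_right fun _ => ⟨(·.of_isSignedHom hg), (·.of_isSignedHom hf)⟩

end Pullback

section LexHG

variable (S1 : SGraph V1) (S2 : SGraph V2)

theorem isSignedHom_lexHG_fiber (a : V1) : IsSignedHom S2 (lexHG S1 S2) (fun b => (a, b)) :=
  fun _ _ h => ⟨Or.inr ⟨rfl, h⟩, (if_pos rfl).symm⟩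

theorem isSignedHom_lexHG_layer (b : V2) : IsSignedHom S1 (lexHG S1 S2) (fun a => (a, b)) :=
  fun _ _ h => ⟨Or.inl h, (if_neg h.ne).symm⟩

variable {S1 S2}

theorem isSignedHom_lexHG_snd (h1 : S1.G = ⊥) : IsSignedHom (lexHG S1 S2) S2 Prod.snd := by
  rintro p q (hadj | ⟨heq, hadj⟩)
  · rw [h1] at hadj
    exact hadj.elim
  · exact ⟨hadj, if_pos heq⟩

theorem isSignedHom_lexHG_fst (h2 : S2.G = ⊥) : IsSignedHom (lexHG S1 S2) S1 Prod.fst := by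
  rintro p q (hadj | ⟨-, hadj⟩)
  · exact ⟨hadj, if_neg hadj.ne⟩
  · rw [h2] at hadj
    exact hadj.elim

end LexHG

theorem stmt9 [Fintype V] (S : SGraph V) (k : ℕ) (hk : 0 < k) :
    bdim (lexHG (Nk k) S) = bdim S ∧ bdim (lexHG S (Nk k)) = bdim S :=
  ⟨bdim_eq_of_isSignedHom (isSignedHom_lexHG_snd rfl) (isSignedHom_lexHG_fiber _ S ⟨0, hk⟩),
    bdim_eq_of_isSignedHom (isSignedHom_lexHG_fst rfl) (isSignedHom_lexHG_layer S _ ⟨0, hk⟩)⟩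
end

section
/- If ζ₁ is a positive k-switching function for Σ₁ and ζ₂ a positive 1-switching function ({−1,1}-valued) for Σ₂, then ζ((u,v)) = ζ₂(v)·ζ₁(u) is a positive k-switching function for the tensor product Σ₁ × Σ₂; consequently bdim(Σ₁ × Σ₂) ≤ bdim(Σ₁) when Σ₂ is balanced. -/
open Finset
open scoped Classical

variable {V V1 V2 W : Type*}

/-!
On an edge `(u,v)(u',v')` of the tensor product, the inner product of the scaled vectors is
`ζ₂(v) ζ₂(v') ⟨ζ₁(u), ζ₁(u')⟩`, so its sign is the product of the two factor signs, which the
two switching functions compensate separately. A balanced `Σ₂` supplies such a `ζ₂`, so every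
positive switching of `Σ₁` transfers to `Σ₁ × Σ₂` in the same dimension.
-/

theorem Finset.sum_mul_mul_mul_left {ι R : Type*} [CommSemiring R] (s : Finset ι) (a b : R)
    (x y : ι → R) : ∑ i ∈ s, (a * x i) * (b * y i) = a * b * ∑ i ∈ s, x i * y i := by
  rw [Finset.mul_sum]
  exact Finset.sum_congr rfl fun i _ => by ring

section Switching

variable [Fintype V] {S : SGraph V} {k : ℕ}

theorem IsPosSwitching.tensorProd [Fintype V1] [Fintype V2] {S1 : SGraph V1} {S2 : SGraph V2}
    {ζ1 : V1 → Fin k → ℤ} (h1 : IsPosSwitching S1 k ζ1) {ζ2 : V2 → ℤ}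
    (h2a : ∀ v, ζ2 v = 1 ∨ ζ2 v = -1)
    (h2b : ∀ u v, S2.G.Adj u v → S2.sign u v * Int.sign (ζ2 u * ζ2 v) = 1) :
    IsPosSwitching (tensorProd S1 S2) k (fun p i => ζ2 p.2 * ζ1 p.1 i) := by
  obtain ⟨hval, hne, hsign⟩ := h1
  have hζ2 : ∀ v, ζ2 v ≠ 0 := fun v => by rcases h2a v with h | h <;> simp [h]
  refine ⟨fun p i => ?_, fun p q hpq => ?_, fun p q hpq => ?_⟩
  · rcases h2a p.2 with h | h <;> rcases hval p.1 i with h' | h' | h' <;> simp [h, h']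
  · rw [Finset.sum_mul_mul_mul_left]
    exact mul_ne_zero (mul_ne_zero (hζ2 _) (hζ2 _)) (hne _ _ hpq.1)
  · rw [Finset.sum_mul_mul_mul_left, Int.sign_mul]
    change S1.sign p.1 q.1 * S2.sign p.2 q.2 * _ = 1
    linear_combination S2.sign p.2 q.2 * (ζ2 p.2 * ζ2 q.2).sign * hsign _ _ hpq.1 + h2b _ _ hpq.2

theorem HasPosSwitching.succ (h : HasPosSwitching S k) : HasPosSwitching S (k + 1) := by
  obtain ⟨ζ, hval, hne, hsign⟩ := h
  let ζ' : V → Fin (k + 1) → ℤ := fun v => Fin.cons 0 (ζ v)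
  have hsum : ∀ u v, ∑ i, ζ' u i * ζ' v i = ∑ i, ζ u i * ζ v i := fun u v => by
    simp [ζ', Fin.sum_univ_succ]
  refine ⟨ζ', fun v i => ?_, fun u v huv => ?_, fun u v huv => ?_⟩
  · cases i using Fin.cases with
    | zero => simp [ζ']
    | succ i => simpa [ζ'] using hval v i
  · simpa only [hsum] using hne u v huv
  · simpa only [hsum] using hsign u v huv

theorem bdim_le_bdim [Fintype W] {T : SGraph W} (hS : HasPosSwitching S k)
    (hST : ∀ n, HasPosSwitching S n → HasPosSwitching T n) : bdim T ≤ bdim S := by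
  -- `hS.succ` keeps the defining set nonempty (so `bdim S` is no junk `0`) even when `k = 0`.
  obtain ⟨hn, hSn⟩ :=
    Nat.sInf_mem (s := {n | 1 ≤ n ∧ HasPosSwitching S n}) ⟨k + 1, by omega, hS.succ⟩
  exact Nat.sInf_le ⟨hn, hST _ hSn⟩

/-- A positive 1-switching may vanish only at isolated vertices, so it can be made `±1`-valued. -/
theorem SGraph.Balanced.exists_sign_switching (h : S.Balanced) :
    ∃ η : V → ℤ, (∀ v, η v = 1 ∨ η v = -1) ∧
      ∀ u v, S.G.Adj u v → S.sign u v * Int.sign (η u * η v) = 1 := by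
  obtain ⟨ζ, hval, hne, hsign⟩ := h
  refine ⟨fun v => if ζ v 0 = 0 then 1 else ζ v 0, fun v => ?_, fun u v huv => ?_⟩
  · rcases hval v 0 with h | h | h <;> simp [h]
  · have huv0 := hne u v huv
    rw [Fin.sum_univ_one] at huv0
    have hu : ζ u 0 ≠ 0 := left_ne_zero_of_mul huv0
    have hv : ζ v 0 ≠ 0 := right_ne_zero_of_mul huv0
    simpa [hu, hv] using hsign u v huv

end Switching

theorem bdim_tensorProd_le_of_balanced [Fintype V1] [Fintype V2] {S1 : SGraph V1}
    {S2 : SGraph V2} {k : ℕ} (h1 : HasPosSwitching S1 k) (h2 : S2.Balanced) :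
    bdim (tensorProd S1 S2) ≤ bdim S1 := by
  obtain ⟨η, hη, hηsign⟩ := h2.exists_sign_switching
  exact bdim_le_bdim h1 fun n ⟨ζ, hζ⟩ => ⟨_, hζ.tensorProd hη hηsign⟩

theorem stmt17 [Fintype V1] [Fintype V2] (S1 : SGraph V1) (S2 : SGraph V2)
    (k : ℕ) (ζ1 : V1 → Fin k → ℤ) (h1 : IsPosSwitching S1 k ζ1)
    (ζ2 : V2 → ℤ) (h2a : ∀ v, ζ2 v = 1 ∨ ζ2 v = -1)
    (h2b : ∀ u v, S2.G.Adj u v → S2.sign u v * Int.sign (ζ2 u * ζ2 v) = 1) :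
    IsPosSwitching (tensorProd S1 S2) k (fun p i => ζ2 p.2 * ζ1 p.1 i) ∧
      (S2.Balanced → bdim (tensorProd S1 S2) ≤ bdim S1) :=
  ⟨h1.tensorProd h2a h2b, bdim_tensorProd_le_of_balanced ⟨ζ1, h1⟩⟩
end

section
/- If Σ₂ is balanced, then the balancing dimension of the strong product Σ₁ ⊠ Σ₂ equals the balancing dimension of Σ₁. -/
/-!
A positive switching function `ζ₁` of `Σ₁` can be made nowhere zero, since a vertex with
`ζ₁ u = 0` is isolated and may be given any nonzero vector. For a balanced `Σ₂` take a nowhere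
zero 1-switching `ζ₂`, i.e. `ζ₂ a = ±1` with `σ₂(ab) = ζ₂ a ζ₂ b`, and put
`ζ (u, a) = ζ₂ a • ζ₁ u`. Then `ζ (u, a) ⬝ ζ (v, b) = (ζ₂ a ζ₂ b) (ζ₁ u ⬝ ζ₁ v)`, and on every
edge of the strong product each factor has the sign of the corresponding coordinate edge, read
as `+1` when the coordinates agree (for `u = v` because `ζ₁ u ⬝ ζ₁ u > 0`). Conversely a fibre
`Σ₁ × {b}` is a copy of `Σ₁`.
-/

open Finset
open scoped Classical

variable {V V1 V2 W : Type*}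

noncomputable def SGraph.reflSign (S : SGraph V) (u v : V) : ℤ := if u = v then 1 else S.sign u v

lemma SGraph.reflSign_mul_self (S : SGraph V) {u v : V} (h : u = v ∨ S.G.Adj u v) :
    S.reflSign u v * S.reflSign u v = 1 := by
  unfold SGraph.reflSign
  split_ifs with huv
  · rfl
  · rcases S.sign_mem u v (h.resolve_left huv) with hs | hs <;> rw [hs] <;> rfl

lemma mul_eq_neg_one_or_zero_or_one {x y : ℤ} (hx : x = -1 ∨ x = 0 ∨ x = 1)
    (hy : y = -1 ∨ y = 0 ∨ y = 1) : x * y = -1 ∨ x * y = 0 ∨ x * y = 1 := by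
  rcases hx with rfl | rfl | rfl <;> rcases hy with rfl | rfl | rfl <;> simp

namespace IsPosSwitching

variable [Fintype V] {S : SGraph V} {k : ℕ} {ζ : V → Fin k → ℤ}

lemma of_sign_dotProduct (hval : ∀ v i, ζ v i = -1 ∨ ζ v i = 0 ∨ ζ v i = 1)
    (hsign : ∀ u v, S.G.Adj u v → S.sign u v * (ζ u ⬝ᵥ ζ v).sign = 1) :
    IsPosSwitching S k ζ := by
  refine ⟨hval, fun u v huv hzero => ?_, hsign⟩
  simpa [dotProduct, hzero] using hsign u v huv

lemma ne_zero_of_adj (hζ : IsPosSwitching S k ζ) {u v : V} (huv : S.G.Adj u v) : ζ u ≠ 0 :=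
  fun hu => hζ.2.1 u v huv (by simp [hu])

lemma sign_dotProduct_eq_reflSign (hζ : IsPosSwitching S k ζ) (hne : ∀ v, ζ v ≠ 0) {u v : V}
    (h : u = v ∨ S.G.Adj u v) : (ζ u ⬝ᵥ ζ v).sign = S.reflSign u v := by
  rcases h with rfl | huv
  · have hpos : 0 < ζ u ⬝ᵥ ζ u :=
      (Finset.sum_nonneg fun i _ => mul_self_nonneg _).lt_of_ne'
        (dotProduct_self_eq_zero.not.mpr (hne u))
    simp [SGraph.reflSign, Int.sign_eq_one_of_pos hpos]
  · have hsign : S.sign u v * (ζ u ⬝ᵥ ζ v).sign = 1 := hζ.2.2 u v huv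
    rw [SGraph.reflSign, if_neg huv.ne]
    rcases S.sign_mem u v huv with hs | hs <;> rw [hs] at hsign ⊢ <;> omega

end IsPosSwitching

lemma HasPosSwitching.exists_ne_zero [Fintype V] {S : SGraph V} {k : ℕ} (hk : 0 < k)
    (h : HasPosSwitching S k) : ∃ ζ, IsPosSwitching S k ζ ∧ ∀ v, ζ v ≠ 0 := by
  obtain ⟨ζ, hζ⟩ := h
  set e : Fin k → ℤ := Pi.single ⟨0, hk⟩ 1
  set ζ' : V → Fin k → ℤ := fun v => if ζ v = 0 then e else ζ v
  have hagree : ∀ u v, S.G.Adj u v → ζ' u = ζ u := fun u v huv =>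
    if_neg (hζ.ne_zero_of_adj huv)
  refine ⟨ζ', ⟨fun v i => ?_, fun u v huv => ?_, fun u v huv => ?_⟩, fun v => ?_⟩
  · by_cases hv : ζ v = 0
    · by_cases hi : i = ⟨0, hk⟩ <;> simp [ζ', e, hv, hi]
    · simpa [ζ', hv] using hζ.1 v i
  · rw [hagree u v huv, hagree v u huv.symm]
    exact hζ.2.1 u v huv
  · rw [hagree u v huv, hagree v u huv.symm]
    exact hζ.2.2 u v huv
  · by_cases hv : ζ v = 0 <;> simp [ζ', e, hv]

lemma HasPosSwitching.comap [Fintype V] [Fintype W] {S : SGraph V} {T : SGraph W} {k : ℕ}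
    (f : V → W) (hadj : ∀ u v, S.G.Adj u v → T.G.Adj (f u) (f v))
    (hsign : ∀ u v, S.G.Adj u v → T.sign (f u) (f v) = S.sign u v)
    (h : HasPosSwitching T k) : HasPosSwitching S k := by
  obtain ⟨ζ, hval, hnz, hsgn⟩ := h
  refine ⟨ζ ∘ f, fun v => hval (f v), fun u v huv => hnz _ _ (hadj u v huv), fun u v huv => ?_⟩
  simpa [hsign u v huv] using hsgn _ _ (hadj u v huv)

namespace strongProd

variable {S1 : SGraph V1} {S2 : SGraph V2}

lemma eq_or_adj_of_adj {u v : V1} {a b : V2} (h : (strongProd S1 S2).G.Adj (u, a) (v, b)) :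
    (u = v ∨ S1.G.Adj u v) ∧ (a = b ∨ S2.G.Adj a b) := by
  rcases h with ⟨h1, h2⟩ | ⟨h1, h2⟩ | ⟨h1, h2⟩ <;> tauto

lemma sign_eq_reflSign_mul {u v : V1} {a b : V2} (h : (strongProd S1 S2).G.Adj (u, a) (v, b)) :
    (strongProd S1 S2).sign (u, a) (v, b) = S1.reflSign u v * S2.reflSign a b := by
  rcases eq_or_ne u v with rfl | huv
  · have hab : a ≠ b := by
      rintro rfl
      exact (strongProd S1 S2).G.irrefl h
    simp [strongProd, SGraph.reflSign, hab]
  · by_cases hab : a = b <;> simp [strongProd, SGraph.reflSign, huv, hab]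

end strongProd

lemma HasPosSwitching.of_strongProd [Fintype V1] [Fintype V2] [Nonempty V2] {S1 : SGraph V1}
    {S2 : SGraph V2} {k : ℕ} (h : HasPosSwitching (strongProd S1 S2) k) :
    HasPosSwitching S1 k := by
  obtain ⟨b⟩ := ‹Nonempty V2›
  refine h.comap (fun u => (u, b)) (fun u v huv => Or.inl ⟨huv, rfl⟩) fun u v huv => ?_
  simp [strongProd, huv.ne]

lemma HasPosSwitching.strongProd_of_balanced [Fintype V1] [Fintype V2] {S1 : SGraph V1}
    {S2 : SGraph V2} {k : ℕ} (hk : 0 < k) (h1 : HasPosSwitching S1 k) (h2 : S2.Balanced) :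
    HasPosSwitching (strongProd S1 S2) k := by
  obtain ⟨ζ1, hζ1, hne1⟩ := h1.exists_ne_zero hk
  obtain ⟨ζ2, hζ2, hne2⟩ := h2.exists_ne_zero one_pos
  refine ⟨fun p => ζ2 p.2 0 • ζ1 p.1, .of_sign_dotProduct
    (fun p i => mul_eq_neg_one_or_zero_or_one (hζ2.1 _ 0) (hζ1.1 _ i)) ?_⟩
  rintro ⟨u, a⟩ ⟨v, b⟩ huv
  obtain ⟨h1, h2⟩ := strongProd.eq_or_adj_of_adj huv
  have hdot : ζ2 a 0 • ζ1 u ⬝ᵥ ζ2 b 0 • ζ1 v = (ζ2 a ⬝ᵥ ζ2 b) * (ζ1 u ⬝ᵥ ζ1 v) := by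
    rw [smul_dotProduct, dotProduct_smul, smul_eq_mul, smul_eq_mul, ← mul_assoc]
    simp [dotProduct]
  calc (strongProd S1 S2).sign (u, a) (v, b) * (ζ2 a 0 • ζ1 u ⬝ᵥ ζ2 b 0 • ζ1 v).sign
      = (S1.reflSign u v * S1.reflSign u v) * (S2.reflSign a b * S2.reflSign a b) := by
        rw [strongProd.sign_eq_reflSign_mul huv, hdot, Int.sign_mul,
          hζ2.sign_dotProduct_eq_reflSign hne2 h2, hζ1.sign_dotProduct_eq_reflSign hne1 h1]
        ring
    _ = 1 := by rw [S1.reflSign_mul_self h1, S2.reflSign_mul_self h2, one_mul]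

theorem stmt19 [Fintype V1] [Fintype V2] [Nonempty V2] (S1 : SGraph V1) (S2 : SGraph V2)
    (h2 : S2.Balanced) : bdim (strongProd S1 S2) = bdim S1 := by
  unfold bdim
  congr 1
  ext k
  exact and_congr_right fun hk =>
    ⟨HasPosSwitching.of_strongProd, fun h => h.strongProd_of_balanced hk h2⟩
end
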